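/- arXiv:math/0701179 — 5 statements merged into one kernel-verified Lean document; each statement's English description precedes it below -/
import Mathlib

section
/- Let Ψ be a convex function on [0,1] and Φ a real-valued function on [0,1]. Let Φ̄ be the greatest convex minorant of Φ, i.e. Φ̄(x) = sup{h(x) : h convex on [0,1], h ≤ Φ}. Then sup_{x∈[0,1]} |Φ̄(x) − Ψ(x)| ≤ sup_{x∈[0,1]} |Φ(x) − Ψ(x)|. -/
/-- Marshall's lemma: the greatest convex minorant `Φbar` of `Φ` is at least as close
to any convex function `Ψ` (in sup norm on `[0,1]`) as `Φ` itself. -/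
theorem stmt_0 (Φ Ψ Φbar : ℝ → ℝ)
    (hΨ : ConvexOn ℝ (Set.Icc (0 : ℝ) 1) Ψ)
    (hΦbar : ∀ x ∈ Set.Icc (0 : ℝ) 1,
      Φbar x = sSup {y : ℝ | ∃ h : ℝ → ℝ, ConvexOn ℝ (Set.Icc (0 : ℝ) 1) h ∧
        (∀ z ∈ Set.Icc (0 : ℝ) 1, h z ≤ Φ z) ∧ y = h x})
    (C : ℝ) (hC : ∀ x ∈ Set.Icc (0 : ℝ) 1, |Φ x - Ψ x| ≤ C) :
    ∀ x ∈ Set.Icc (0 : ℝ) 1, |Φbar x - Ψ x| ≤ C := by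
  intro x hx
  set S := {y : ℝ | ∃ h : ℝ → ℝ, ConvexOn ℝ (Set.Icc (0 : ℝ) 1) h ∧
      (∀ z ∈ Set.Icc (0 : ℝ) 1, h z ≤ Φ z) ∧ y = h x} with hS
  have hconv : ConvexOn ℝ (Set.Icc (0 : ℝ) 1) (fun z => Ψ z - C) :=
    hΨ.sub (concaveOn_const C (convex_Icc 0 1))
  have hle : ∀ z ∈ Set.Icc (0 : ℝ) 1, Ψ z - C ≤ Φ z := fun z hz => by
    have := (abs_le.mp (hC z hz)).1; linarith
  have hmem : (Ψ x - C) ∈ S := ⟨fun z => Ψ z - C, hconv, hle, rfl⟩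
  have hub : ∀ y ∈ S, y ≤ Ψ x + C := by
    rintro y ⟨h, hh, hhle, rfl⟩
    have h1 := hhle x hx
    have h2 := (abs_le.mp (hC x hx)).2
    linarith
  have hbdd : BddAbove S := ⟨Ψ x + C, hub⟩
  have h1 : Ψ x - C ≤ sSup S := le_csSup hbdd hmem
  have h2 : sSup S ≤ Ψ x + C := csSup_le ⟨_, hmem⟩ hub
  rw [hΦbar x hx, ← hS, abs_le]
  constructor <;> linarith
end

section
/- Let F be a twice continuously differentiable distribution function on [s,t] with density f = F′ and f′ = F″. Define R(s,t) = (1/2)(F(t)+F(s))(t−s) − ∫_s^t F(u) du. Then R(s,t) ≤ (1/12) f′(s)(t−s)^3 + (1/24) (sup_{s≤x≤t} f″(x)) (t−s)^4 and R(s,t) ≥ (1/12) f′(s)(t−s)^3 + (1/24) (inf_{s≤x≤t} f″(x)) (t−s)^4. -/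
/-!
Three successive comparisons of derivatives on `[s, x]`. From `f'' ≤ M` one gets
`f' x ≤ f' s + M (x - s)`; multiplying by `(x - s) / 2` bounds the derivative of
`½ f x (x - s) - ½ (F x - F s)`, which is itself the derivative of `x ↦ R(s, x)`, and one more
comparison bounds `R(s, x)`. The lower bound is the upper bound for `-F`.
-/

open Set MeasureTheory intervalIntegral

theorem le_of_hasDerivAt_le_of_le_left {g g' B B' : ℝ → ℝ} {a b : ℝ}
    (hg : ContinuousOn g (Icc a b)) (hB : ContinuousOn B (Icc a b))
    (hg' : ∀ x ∈ Ioo a b, HasDerivAt g (g' x) x) (hB' : ∀ x ∈ Ioo a b, HasDerivAt B (B' x) x)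
    (ha : g a ≤ B a) (hle : ∀ x ∈ Ioo a b, g' x ≤ B' x) :
    ∀ x ∈ Icc a b, g x ≤ B x := by
  have hmono : MonotoneOn (fun x => B x - g x) (Icc a b) := by
    refine monotoneOn_of_hasDerivWithinAt_nonneg (f' := fun x => B' x - g' x) (convex_Icc a b)
      (hB.sub hg) ?_ ?_
    · rw [interior_Icc]
      exact fun x hx => ((hB' x hx).sub (hg' x hx)).hasDerivWithinAt
    · rw [interior_Icc]
      exact fun x hx => sub_nonneg.2 (hle x hx)
  intro x hx
  have : B a - g a ≤ B x - g x := hmono (left_mem_Icc.2 (hx.1.trans hx.2)) hx hx.1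
  linarith

/-- The paper's `R(s, x)`. -/
noncomputable def trapezoidError (F : ℝ → ℝ) (s x : ℝ) : ℝ :=
  (1 / 2) * (F x + F s) * (x - s) - ∫ u in s..x, F u

theorem trapezoidError_neg (F : ℝ → ℝ) (s x : ℝ) :
    trapezoidError (-F) s x = -trapezoidError F s x := by
  simp only [trapezoidError, Pi.neg_apply, intervalIntegral.integral_neg]
  ring

theorem continuousOn_trapezoidError {F : ℝ → ℝ} {s t : ℝ} (hF : ContinuousOn F (Icc s t)) :
    ContinuousOn (trapezoidError F s) (Icc s t) := by
  intro x hx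
  have hst : s ≤ t := hx.1.trans hx.2
  have hprim := continuousOn_primitive_interval'
    (hF.intervalIntegrable_of_Icc (μ := volume) hst) left_mem_uIcc
  rw [uIcc_of_le hst] at hprim
  exact ((continuousOn_const.mul (hF.add continuousOn_const)).mul
    (continuousOn_id.sub continuousOn_const)).sub hprim x hx

theorem hasDerivAt_trapezoidError {F f : ℝ → ℝ} {s t x : ℝ}
    (hF : ∀ x ∈ Icc s t, HasDerivAt F (f x) x) (hx : x ∈ Ioo s t) :
    HasDerivAt (trapezoidError F s) ((1 / 2) * f x * (x - s) - (1 / 2) * (F x - F s)) x := by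
  have hcont : ContinuousOn F (Icc s t) := HasDerivAt.continuousOn hF
  have hprim : HasDerivAt (fun x => ∫ u in s..x, F u) (F x) x :=
    integral_hasDerivAt_right
      ((hcont.mono (Icc_subset_Icc_right hx.2.le)).intervalIntegrable_of_Icc hx.1.le)
      ((hcont.mono Ioo_subset_Icc_self).stronglyMeasurableAtFilter isOpen_Ioo x hx)
      (hF x (Ioo_subset_Icc_self hx)).continuousAt
  have := ((((hF x (Ioo_subset_Icc_self hx)).add_const (F s)).const_mul (1 / 2)).mul
    ((hasDerivAt_id' x).sub_const s)).sub hprim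
  exact this.congr_deriv (by ring)

theorem hasDerivAt_mul_sub_pow (c s : ℝ) (n : ℕ) (x : ℝ) :
    HasDerivAt (fun x => c * (x - s) ^ (n + 1)) (c * (n + 1) * (x - s) ^ n) x :=
  ((((hasDerivAt_id' x).sub_const s).pow (n + 1)).const_mul c).congr_deriv (by push_cast; ring)

theorem trapezoidError_deriv_le {F f f' f'' : ℝ → ℝ} {s t M : ℝ}
    (hF : ∀ x ∈ Icc s t, HasDerivAt F (f x) x)
    (hf : ∀ x ∈ Icc s t, HasDerivAt f (f' x) x)
    (hf' : ∀ x ∈ Icc s t, HasDerivAt f' (f'' x) x)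
    (hM : ∀ x ∈ Ioo s t, f'' x ≤ M) :
    ∀ x ∈ Icc s t, (1 / 2) * f x * (x - s) - (1 / 2) * (F x - F s)
      ≤ (1 / 4) * f' s * (x - s) ^ 2 + (1 / 6) * M * (x - s) ^ 3 := by
  have hslope : ∀ x ∈ Icc s t, f' x ≤ f' s + M * (x - s) :=
    le_of_hasDerivAt_le_of_le_left (HasDerivAt.continuousOn hf') (by fun_prop)
      (fun x hx => hf' x (Ioo_subset_Icc_self hx))
      (fun x _ => (((hasDerivAt_id' x).sub_const s).const_mul M).const_add (f' s))
      (by simp) (fun x hx => by simpa using hM x hx)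
  refine le_of_hasDerivAt_le_of_le_left (g' := fun x => (1 / 2) * f' x * (x - s))
    (B' := fun x => (1 / 2) * f' s * (x - s) + (1 / 2) * M * (x - s) ^ 2) ?_ (by fun_prop) ?_ ?_
    (by simp) ?_
  · exact HasDerivAt.continuousOn fun x hx =>
      ((((hf x hx).const_mul (1 / 2)).mul ((hasDerivAt_id' x).sub_const s)).sub
        (((hF x hx).sub_const (F s)).const_mul (1 / 2)))
  · intro x hx
    have hxI := Ioo_subset_Icc_self hx
    exact ((((hf x hxI).const_mul (1 / 2)).mul ((hasDerivAt_id' x).sub_const s)).sub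
      (((hF x hxI).sub_const (F s)).const_mul (1 / 2))).congr_deriv (by ring)
  · intro x _
    exact ((hasDerivAt_mul_sub_pow _ s 1 x).add (hasDerivAt_mul_sub_pow _ s 2 x)).congr_deriv
      (by norm_num; ring)
  · intro x hx
    have hxs : 0 ≤ x - s := sub_nonneg.2 hx.1.le
    nlinarith [mul_le_mul_of_nonneg_left (hslope x (Ioo_subset_Icc_self hx)) hxs]

theorem trapezoidError_le {F f f' f'' : ℝ → ℝ} {s t M : ℝ}
    (hF : ∀ x ∈ Icc s t, HasDerivAt F (f x) x)
    (hf : ∀ x ∈ Icc s t, HasDerivAt f (f' x) x)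
    (hf' : ∀ x ∈ Icc s t, HasDerivAt f' (f'' x) x)
    (hM : ∀ x ∈ Ioo s t, f'' x ≤ M) :
    ∀ x ∈ Icc s t,
      trapezoidError F s x ≤ (1 / 12) * f' s * (x - s) ^ 3 + (1 / 24) * M * (x - s) ^ 4 :=
  le_of_hasDerivAt_le_of_le_left (continuousOn_trapezoidError (HasDerivAt.continuousOn hF))
    (by fun_prop) (fun x hx => hasDerivAt_trapezoidError hF hx)
    (fun x _ => ((hasDerivAt_mul_sub_pow _ s 2 x).add (hasDerivAt_mul_sub_pow _ s 3 x)).congr_deriv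
      (by norm_num; ring))
    (by simp [trapezoidError])
    (fun x hx => trapezoidError_deriv_le hF hf hf' hM x (Ioo_subset_Icc_self hx))

theorem le_trapezoidError {F f f' f'' : ℝ → ℝ} {s t m : ℝ}
    (hF : ∀ x ∈ Icc s t, HasDerivAt F (f x) x)
    (hf : ∀ x ∈ Icc s t, HasDerivAt f (f' x) x)
    (hf' : ∀ x ∈ Icc s t, HasDerivAt f' (f'' x) x)
    (hm : ∀ x ∈ Ioo s t, m ≤ f'' x) :
    ∀ x ∈ Icc s t,
      (1 / 12) * f' s * (x - s) ^ 3 + (1 / 24) * m * (x - s) ^ 4 ≤ trapezoidError F s x := by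
  intro x hx
  have := trapezoidError_le (fun x hx => (hF x hx).neg) (fun x hx => (hf x hx).neg)
    (fun x hx => (hf' x hx).neg) (M := -m) (fun x hx => neg_le_neg (hm x hx)) x hx
  rw [trapezoidError_neg] at this
  linarith

/-- Lemma 4.4: trapezoid-rule error bounds for a C³ distribution function. -/
theorem stmt_2 (F f f' f'' : ℝ → ℝ) (s t : ℝ) (hst : s < t)
    (hF : ∀ x ∈ Set.Icc s t, HasDerivAt F (f x) x)
    (hf : ∀ x ∈ Set.Icc s t, HasDerivAt f (f' x) x)
    (hf' : ∀ x ∈ Set.Icc s t, HasDerivAt f' (f'' x) x)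
    (hf'' : ContinuousOn f'' (Set.Icc s t)) :
    (1 / 2) * (F t + F s) * (t - s) - (∫ u in s..t, F u)
        ≤ (1 / 12) * f' s * (t - s) ^ 3
          + (1 / 24) * sSup (f'' '' Set.Icc s t) * (t - s) ^ 4
    ∧ (1 / 2) * (F t + F s) * (t - s) - (∫ u in s..t, F u)
        ≥ (1 / 12) * f' s * (t - s) ^ 3
          + (1 / 24) * sInf (f'' '' Set.Icc s t) * (t - s) ^ 4 := by
  have hcompact : IsCompact (f'' '' Icc s t) := isCompact_Icc.image_of_continuousOn hf''
  have ht : t ∈ Icc s t := right_mem_Icc.2 hst.le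
  exact ⟨trapezoidError_le hF hf hf'
      (fun x hx => le_csSup hcompact.bddAbove ⟨x, Ioo_subset_Icc_self hx, rfl⟩) t ht,
    le_trapezoidError hF hf hf'
      (fun x hx => csInf_le hcompact.bddBelow ⟨x, Ioo_subset_Icc_self hx, rfl⟩) t ht⟩
end

section
/- Let F be a C¹ distribution function with positive density f = F′ and continuous f′ on an interval, with F strictly increasing there. Define γ̃₁ = sup (−f′/f²) over the interval and suppose γ̃₁ < ∞. Let a_j = F⁻¹(jc/k) for a fixed c ∈ (0,1) and integers j, and let Δ_j a = a_j − a_{j−1}. If k ≥ γ̃₁ (and k > γ̃₁), then Δ_{j+1}a / Δ_j a ≤ 1 + γ̃₁(R+1)/k, where R = max{1, sup f}/inf f over the interval (assuming R < ∞). -/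
open Set

set_option maxHeartbeats 1000000

/-- Spacing-ratio bound for quantile knots (from Lemma 4.1 of Balabdaoui–Wellner). -/
theorem stmt_6 (F f f' : ℝ → ℝ) (A B : ℝ) (hAB : A < B)
    (hF : ∀ x ∈ Set.Icc A B, HasDerivAt F (f x) x)
    (hf : ∀ x ∈ Set.Icc A B, HasDerivAt f (f' x) x)
    (hf' : ContinuousOn f' (Set.Icc A B))
    (hfpos : ∀ x ∈ Set.Icc A B, 0 < f x)
    (hFmono : StrictMonoOn F (Set.Icc A B))
    (γ : ℝ) (hγ : ∀ x ∈ Set.Icc A B, -f' x / (f x) ^ 2 ≤ γ) (hγfin : 0 ≤ γ)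
    (m M R : ℝ) (hm : 0 < m) (hmf : ∀ x ∈ Set.Icc A B, m ≤ f x)
    (hMf : ∀ x ∈ Set.Icc A B, f x ≤ M) (hR : R = max 1 M / m)
    (c : ℝ) (hc : c ∈ Set.Ioo (0 : ℝ) 1) (k : ℕ) (j : ℤ)
    (p q r : ℝ) (hp : p ∈ Set.Icc A B) (hq : q ∈ Set.Icc A B) (hr : r ∈ Set.Icc A B)
    (hFp : F p = ((j : ℝ) - 1) * c / k) (hFq : F q = (j : ℝ) * c / k)
    (hFr : F r = ((j : ℝ) + 1) * c / k)
    (hk : γ ≤ (k : ℝ)) (hk' : γ < (k : ℝ)) :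
    (r - q) / (q - p) ≤ 1 + γ * (R + 1) / k := by
  have hk0 : (0:ℝ) < (k:ℝ) := lt_of_le_of_lt hγfin hk'
  have hh : (0:ℝ) < c / k := div_pos hc.1 hk0
  have hFqp : F q - F p = c / k := by rw [hFq, hFp]; ring
  have hFrq : F r - F q = c / k := by rw [hFr, hFq]; ring
  have hpq : p < q := by
    refine (hFmono.lt_iff_lt hp hq).mp ?_; linarith
  have hqr : q < r := by
    refine (hFmono.lt_iff_lt hq hr).mp ?_; linarith
  have hM0 : 0 < M :=
    lt_of_lt_of_le hm (le_trans (hmf A ⟨le_refl A, hAB.le⟩) (hMf A ⟨le_refl A, hAB.le⟩))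
  have hsub : ∀ {x y : ℝ}, x ∈ Icc A B → y ∈ Icc A B → Icc x y ⊆ Icc A B :=
    fun hx hy => Icc_subset_Icc hx.1 hy.2
  have hcontF : ∀ {x y : ℝ}, x ∈ Icc A B → y ∈ Icc A B → ContinuousOn F (Icc x y) :=
    fun hx hy z hz => (hF z (hsub hx hy hz)).continuousAt.continuousWithinAt
  have hqp0 : 0 < q - p := sub_pos.mpr hpq
  -- Lower bound on q - p via MVT
  have hqpM : c / k ≤ M * (q - p) := by
    obtain ⟨ξ, hξ, hξeq⟩ := exists_hasDerivAt_eq_slope F f hpq (hcontF hp hq)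
      (fun x hx => hF x (hsub hp hq (Ioo_subset_Icc_self hx)))
    have hξAB : ξ ∈ Icc A B := hsub hp hq (Ioo_subset_Icc_self hξ)
    have heq : f ξ * (q - p) = c / k := by
      rw [hξeq, div_mul_cancel₀ _ hqp0.ne', hFqp]
    nlinarith [hMf ξ hξAB]
  -- auxiliary functions
  set u : ℝ → ℝ := fun x => x - γ / (2 * m) * (F x) ^ 2 with hu
  set u' : ℝ → ℝ := fun x => 1 - γ / m * (F x * f x) with hu'
  have hud : ∀ x ∈ Icc A B, HasDerivAt u (u' x) x := by
    intro x hx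
    have h1 : HasDerivAt (fun y => y - γ / (2 * m) * (F y) ^ 2)
        (1 - γ / (2 * m) * (2 * F x ^ 1 * f x)) x :=
      (hasDerivAt_id x).sub (((hF x hx).pow 2).const_mul (γ / (2 * m)))
    convert h1 using 1
    simp only [hu', pow_one]
    field_simp
  have hcontu : ∀ {x y : ℝ}, x ∈ Icc A B → y ∈ Icc A B → ContinuousOn u (Icc x y) :=
    fun hx hy z hz => (hud z (hsub hx hy hz)).continuousAt.continuousWithinAt
  set φ : ℝ → ℝ := fun x => (f x)⁻¹ - γ / m * F x with hφ
  -- Cauchy MVT on [p,q] and [q,r]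
  have key : ∀ a b : ℝ, a ∈ Icc A B → b ∈ Icc A B → a < b → F b - F a = c / k →
      ∃ ζ ∈ Ioo a b, u b - u a = c / k * φ ζ := by
    intro a b ha hb hab' hFba
    obtain ⟨ζ, hζ, hζeq⟩ := exists_ratio_hasDerivAt_eq_ratio_slope u u' hab'
      (hcontu ha hb) (fun x hx => hud x (hsub ha hb (Ioo_subset_Icc_self hx)))
      F f (hcontF ha hb) (fun x hx => hF x (hsub ha hb (Ioo_subset_Icc_self hx)))
    refine ⟨ζ, hζ, ?_⟩
    have hζAB : ζ ∈ Icc A B := hsub ha hb (Ioo_subset_Icc_self hζ)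
    have hfζ : f ζ ≠ 0 := (hfpos ζ hζAB).ne'
    rw [hFba] at hζeq
    have h2 : u b - u a = c / k * (u' ζ / f ζ) := by
      rw [mul_div_assoc'] at *
      field_simp at hζeq ⊢
      linarith [hζeq]
    rw [h2, hφ, hu']
    field_simp
  obtain ⟨ζ₁, hζ₁, he₁⟩ := key p q hp hq hpq hFqp
  obtain ⟨ζ₂, hζ₂, he₂⟩ := key q r hq hr hqr hFrq
  have hζ₁AB : ζ₁ ∈ Icc A B := hsub hp hq (Ioo_subset_Icc_self hζ₁)
  have hζ₂AB : ζ₂ ∈ Icc A B := hsub hq hr (Ioo_subset_Icc_self hζ₂)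
  have hζ12 : ζ₁ < ζ₂ := lt_trans hζ₁.2 hζ₂.1
  -- φ is decreasing: φ ζ₂ ≤ φ ζ₁
  have hφle : φ ζ₂ ≤ φ ζ₁ := by
    have hφd : ∀ x ∈ Icc A B, HasDerivAt φ (-(f' x) / (f x) ^ 2 - γ / m * f x) x := by
      intro x hx
      exact ((hf x hx).inv (hfpos x hx).ne').sub ((hF x hx).const_mul (γ / m))
    obtain ⟨ω, hω, hωeq⟩ := exists_hasDerivAt_eq_slope φ
      (fun x => -(f' x) / (f x) ^ 2 - γ / m * f x) hζ12
      (fun z hz => (hφd z (hsub hζ₁AB hζ₂AB hz)).continuousAt.continuousWithinAt)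
      (fun x hx => hφd x (hsub hζ₁AB hζ₂AB (Ioo_subset_Icc_self hx)))
    have hωAB : ω ∈ Icc A B := hsub hζ₁AB hζ₂AB (Ioo_subset_Icc_self hω)
    have hd0 : -(f' ω) / (f ω) ^ 2 - γ / m * f ω ≤ 0 := by
      have h1 := hγ ω hωAB
      have h2 := hmf ω hωAB
      have h3 : γ / m * m ≤ γ / m * f ω :=
        mul_le_mul_of_nonneg_left h2 (div_nonneg hγfin hm.le)
      have h4 : γ / m * m = γ := by field_simp
      linarith
    have hden : (0:ℝ) < ζ₂ - ζ₁ := sub_pos.mpr hζ12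
    have h5 : (φ ζ₂ - φ ζ₁) / (ζ₂ - ζ₁) ≤ 0 := hωeq ▸ hd0
    have h6 := (div_le_iff₀ hden).mp h5
    linarith
  -- second difference bound
  have hsecond : (r - q) - (q - p) ≤ γ / m * (c / k) ^ 2 := by
    have h1 : u r - u q ≤ u q - u p := by
      rw [he₁, he₂]
      exact mul_le_mul_of_nonneg_left hφle hh.le
    have h1' : (r - γ / (2 * m) * (F r) ^ 2) - (q - γ / (2 * m) * (F q) ^ 2)
        ≤ (q - γ / (2 * m) * (F q) ^ 2) - (p - γ / (2 * m) * (F p) ^ 2) := by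
      simpa only [hu] using h1
    have hkey : r - q - (q - p)
        ≤ γ / (2 * m) * ((F r) ^ 2 - 2 * (F q) ^ 2 + (F p) ^ 2) := by
      nlinarith [h1']
    have hFsq : (F r) ^ 2 - 2 * (F q) ^ 2 + (F p) ^ 2 = 2 * (c / k) ^ 2 := by
      rw [hFp, hFq, hFr]; field_simp; ring
    have h2m : γ / (2 * m) * (2 * (c / k) ^ 2) = γ / m * (c / k) ^ 2 := by
      field_simp
    rw [hFsq, h2m] at hkey
    exact hkey
  -- conclude
  rw [div_le_iff₀ hqp0]
  have hRM : M ≤ R * m := by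
    rw [hR, div_mul_cancel₀ _ hm.ne']; exact le_max_right 1 M
  have hgoal : γ / m * (c / k) ^ 2 ≤ γ * (R + 1) / k * (q - p) := by
    have hA : γ / m * M ≤ γ * (R + 1) := by
      have h1 : M ≤ (R + 1) * m := by nlinarith
      have h2 : γ / m * M ≤ γ / m * ((R + 1) * m) :=
        mul_le_mul_of_nonneg_left h1 (div_nonneg hγfin hm.le)
      have h3 : γ / m * ((R + 1) * m) = γ * (R + 1) := by field_simp
      linarith
    have hck1 : c / k ≤ 1 / k := by
      gcongr
      exact hc.2.le
    calc γ / m * (c / k) ^ 2 = γ / m * (c / k) * (c / k) := by ring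
      _ ≤ γ / m * (c / k) * (1 / k) := by
          apply mul_le_mul_of_nonneg_left hck1
          positivity
      _ ≤ γ / m * (M * (q - p)) * (1 / k) := by
          apply mul_le_mul_of_nonneg_right ?_ (by positivity)
          apply mul_le_mul_of_nonneg_left hqpM (by positivity)
      _ = (γ / m * M) * ((q - p) / k) := by ring
      _ ≤ (γ * (R + 1)) * ((q - p) / k) := by
          apply mul_le_mul_of_nonneg_right hA
          positivity
      _ = γ * (R + 1) / k * (q - p) := by ring
  nlinarith [hsecond, hgoal]
end

section
/- Under the setup of quantile knots a_j = F⁻¹(jc/k) with F strictly increasing, density f strictly decreasing on the relevant interval, γ̃₁ = sup(−f′/f²) < ∞ and R = max{1, sup f}/inf f < ∞: if k ≥ 5 γ̃₁ R then 1 ≤ f(a_{j−1})/f(a_j) ≤ Δ_{j+1}a / Δ_{j−1}a ≤ 2. -/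
set_option maxHeartbeats 800000


/-- Lemma 4.1 of Balabdaoui–Wellner: density ratio and spacing ratio bounds for
quantile knots when `k ≥ 5 γ̃₁ R`. -/
theorem stmt_7 (F f f' : ℝ → ℝ) (A B : ℝ) (hAB : A < B)
    (hF : ∀ x ∈ Set.Icc A B, HasDerivAt F (f x) x)
    (hf : ∀ x ∈ Set.Icc A B, HasDerivAt f (f' x) x)
    (hf' : ContinuousOn f' (Set.Icc A B))
    (hfpos : ∀ x ∈ Set.Icc A B, 0 < f x)
    (hFmono : StrictMonoOn F (Set.Icc A B))
    (hfanti : StrictAntiOn f (Set.Icc A B))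
    (γ : ℝ) (hγ : ∀ x ∈ Set.Icc A B, -f' x / (f x) ^ 2 ≤ γ) (hγfin : 0 ≤ γ)
    (m M R : ℝ) (hm : 0 < m) (hmf : ∀ x ∈ Set.Icc A B, m ≤ f x)
    (hMf : ∀ x ∈ Set.Icc A B, f x ≤ M) (hR : R = max 1 M / m)
    (c : ℝ) (hc : c ∈ Set.Ioo (0 : ℝ) 1) (k : ℕ) (j : ℤ)
    (p₀ p₁ p₂ p₃ : ℝ)
    (hp₀ : p₀ ∈ Set.Icc A B) (hp₁ : p₁ ∈ Set.Icc A B)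
    (hp₂ : p₂ ∈ Set.Icc A B) (hp₃ : p₃ ∈ Set.Icc A B)
    (hF₀ : F p₀ = ((j : ℝ) - 2) * c / k) (hF₁ : F p₁ = ((j : ℝ) - 1) * c / k)
    (hF₂ : F p₂ = (j : ℝ) * c / k) (hF₃ : F p₃ = ((j : ℝ) + 1) * c / k)
    (hk : 5 * γ * R ≤ (k : ℝ)) :
    1 ≤ f p₁ / f p₂ ∧ f p₁ / f p₂ ≤ (p₃ - p₂) / (p₁ - p₀)
      ∧ (p₃ - p₂) / (p₁ - p₀) ≤ 2 := by
  have hFc : ContinuousOn F (Set.Icc A B) := fun x hx => (hF x hx).continuousAt.continuousWithinAt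
  have hfc : ContinuousOn f (Set.Icc A B) := fun x hx => (hf x hx).continuousAt.continuousWithinAt
  have hR0 : 0 < R := hR ▸ div_pos (lt_of_lt_of_le one_pos (le_max_left 1 M)) hm
  have hc0 : 0 < c := hc.1
  have hc1 : c ≤ 1 := hc.2.le
  have hAmem : A ∈ Set.Icc A B := Set.left_mem_Icc.mpr hAB.le
  have hBmem : B ∈ Set.Icc A B := Set.right_mem_Icc.mpr hAB.le
  have hkpos : 0 < (k : ℝ) := by
    rcases Nat.eq_zero_or_pos k with h0 | h0
    · exfalso
      subst h0
      simp only [Nat.cast_zero] at hk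
      have hγ0 : γ = 0 := by
        by_contra hne
        have hγpos : 0 < γ := lt_of_le_of_ne hγfin (Ne.symm hne)
        nlinarith [mul_pos hγpos hR0]
      obtain ⟨η, hη, hηeq⟩ := exists_hasDerivAt_eq_slope f f' hAB hfc
        (fun x hx => hf x (Set.mem_Icc_of_Ioo hx))
      have hηmem : η ∈ Set.Icc A B := Set.mem_Icc_of_Ioo hη
      have h2 : -f' η / f η ^ 2 ≤ 0 := by have h := hγ η hηmem; rw [hγ0] at h; exact h
      have h4 : -f' η ≤ 0 := by
        by_contra hcon
        push_neg at hcon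
        have : 0 < -f' η / f η ^ 2 :=
          div_pos hcon (by have := hfpos η hηmem; positivity)
        linarith
      have hBA : f B < f A := hfanti hAmem hBmem hAB
      have : f' η < 0 := by
        rw [hηeq]; exact div_neg_of_neg_of_pos (by linarith) (by linarith)
      linarith
    · exact_mod_cast h0
  obtain ⟨q, hqdef⟩ : ∃ q : ℝ, q = c / (k : ℝ) := ⟨_, rfl⟩
  have hq : 0 < q := hqdef ▸ div_pos hc0 hkpos
  have hd1 : F p₁ - F p₀ = q := by rw [hF₁, hF₀, hqdef]; ring
  have hd3 : F p₃ - F p₂ = q := by rw [hF₃, hF₂, hqdef]; ring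
  have hd03 : F p₃ - F p₀ = 3 * q := by rw [hF₃, hF₀, hqdef]; ring
  have hd12 : F p₂ - F p₁ = q := by rw [hF₂, hF₁, hqdef]; ring
  have h01 : p₀ < p₁ := (hFmono.lt_iff_lt hp₀ hp₁).mp (by linarith)
  have h12 : p₁ < p₂ := (hFmono.lt_iff_lt hp₁ hp₂).mp (by linarith)
  have h23 : p₂ < p₃ := (hFmono.lt_iff_lt hp₂ hp₃).mp (by linarith)
  have h03 : p₀ < p₃ := by linarith
  obtain ⟨ξ₁, hξ₁mem, hξ₁eq⟩ := exists_hasDerivAt_eq_slope F f h01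
    (hFc.mono (Set.Icc_subset_Icc hp₀.1 hp₁.2))
    (fun x hx => hF x (Set.Icc_subset_Icc hp₀.1 hp₁.2 (Set.mem_Icc_of_Ioo hx)))
  obtain ⟨ξ₃, hξ₃mem, hξ₃eq⟩ := exists_hasDerivAt_eq_slope F f h23
    (hFc.mono (Set.Icc_subset_Icc hp₂.1 hp₃.2))
    (fun x hx => hF x (Set.Icc_subset_Icc hp₂.1 hp₃.2 (Set.mem_Icc_of_Ioo hx)))
  obtain ⟨η, hηmem, hηeq⟩ := exists_hasDerivAt_eq_slope F f h03
    (hFc.mono (Set.Icc_subset_Icc hp₀.1 hp₃.2))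
    (fun x hx => hF x (Set.Icc_subset_Icc hp₀.1 hp₃.2 (Set.mem_Icc_of_Ioo hx)))
  have hξ₁AB : ξ₁ ∈ Set.Icc A B := ⟨le_trans hp₀.1 hξ₁mem.1.le, le_trans hξ₁mem.2.le hp₁.2⟩
  have hξ₃AB : ξ₃ ∈ Set.Icc A B := ⟨le_trans hp₂.1 hξ₃mem.1.le, le_trans hξ₃mem.2.le hp₃.2⟩
  have hηAB : η ∈ Set.Icc A B := ⟨le_trans hp₀.1 hηmem.1.le, le_trans hηmem.2.le hp₃.2⟩
  have hfξ₁ : f ξ₁ * (p₁ - p₀) = q := by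
    rw [hξ₁eq, div_mul_cancel₀ _ (sub_ne_zero.mpr h01.ne')]; exact hd1
  have hfξ₃ : f ξ₃ * (p₃ - p₂) = q := by
    rw [hξ₃eq, div_mul_cancel₀ _ (sub_ne_zero.mpr h23.ne')]; exact hd3
  have hfη : f η * (p₃ - p₀) = 3 * q := by
    rw [hηeq, div_mul_cancel₀ _ (sub_ne_zero.mpr h03.ne')]; exact hd03
  have hfξ₁pos := hfpos ξ₁ hξ₁AB
  have hfξ₃pos := hfpos ξ₃ hξ₃AB
  have hfp₂pos := hfpos p₂ hp₂
  have hfp₁pos := hfpos p₁ hp₁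
  have hp₁p₂ : f p₂ < f p₁ := hfanti hp₁ hp₂ h12
  have G1 : 1 ≤ f p₁ / f p₂ := (one_le_div hfp₂pos).mpr hp₁p₂.le
  have hr : (p₃ - p₂) / (p₁ - p₀) = f ξ₁ / f ξ₃ := by
    rw [div_eq_div_iff (sub_ne_zero.mpr h01.ne') hfξ₃pos.ne']
    linear_combination hfξ₃ - hfξ₁
  have hfξ₁ge : f p₁ ≤ f ξ₁ := (hfanti hξ₁AB hp₁ hξ₁mem.2).le
  have hfξ₃le : f ξ₃ ≤ f p₂ := (hfanti hp₂ hξ₃AB hξ₃mem.1).le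
  have G2 : f p₁ / f p₂ ≤ (p₃ - p₂) / (p₁ - p₀) := by
    rw [hr, div_le_div_iff₀ hfp₂pos hfξ₃pos]
    exact mul_le_mul hfξ₁ge hfξ₃le hfξ₃pos.le hfξ₁pos.le
  -- MVT for 1/f on [ξ₁, ξ₃]
  have h13 : ξ₁ < ξ₃ := by linarith [hξ₁mem.2, hξ₃mem.1]
  have hsub13 : Set.Icc ξ₁ ξ₃ ⊆ Set.Icc A B := Set.Icc_subset_Icc hξ₁AB.1 hξ₃AB.2
  have hgc : ContinuousOn (fun x => (f x)⁻¹) (Set.Icc ξ₁ ξ₃) :=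
    (hfc.mono hsub13).inv₀ (fun x hx => (hfpos x (hsub13 hx)).ne')
  obtain ⟨η₂, hη₂mem, hη₂eq⟩ := exists_hasDerivAt_eq_slope (fun x => (f x)⁻¹)
    (fun x => -f' x / f x ^ 2) h13 hgc
    (fun x hx => by
      have hxAB : x ∈ Set.Icc A B := hsub13 (Set.mem_Icc_of_Ioo hx)
      exact (hf x hxAB).inv (hfpos x hxAB).ne')
  have hη₂AB : η₂ ∈ Set.Icc A B := hsub13 (Set.mem_Icc_of_Ioo hη₂mem)
  have hinv : (f ξ₃)⁻¹ - (f ξ₁)⁻¹ ≤ γ * (ξ₃ - ξ₁) := by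
    have hs := hγ η₂ hη₂AB
    rw [hη₂eq] at hs
    calc (f ξ₃)⁻¹ - (f ξ₁)⁻¹
        = ((f ξ₃)⁻¹ - (f ξ₁)⁻¹) / (ξ₃ - ξ₁) * (ξ₃ - ξ₁) := by
          rw [div_mul_cancel₀ _ (sub_ne_zero.mpr h13.ne')]
      _ ≤ γ * (ξ₃ - ξ₁) := mul_le_mul_of_nonneg_right hs (by linarith)
  have hPd : m * (p₃ - p₀) ≤ 3 * q := by
    have := mul_le_mul_of_nonneg_right (hmf η hηAB) (by linarith : (0:ℝ) ≤ p₃ - p₀)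
    linarith
  have hid : f ξ₁ - f ξ₃ = f ξ₁ * f ξ₃ * ((f ξ₃)⁻¹ - (f ξ₁)⁻¹) := by
    field_simp
  have hξ13 : ξ₃ - ξ₁ ≤ p₃ - p₀ := by
    have := hξ₁mem.1; have := hξ₃mem.2; linarith
  have hγ13 : γ * (ξ₃ - ξ₁) ≤ γ * (p₃ - p₀) := mul_le_mul_of_nonneg_left hξ13 hγfin
  have hm13 : m * (γ * (p₃ - p₀)) ≤ γ * (3 * q) := by
    calc m * (γ * (p₃ - p₀)) = γ * (m * (p₃ - p₀)) := by ring
      _ ≤ γ * (3 * q) := mul_le_mul_of_nonneg_left hPd hγfin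
  have hMm : M ≤ R * m := by
    rw [hR, div_mul_cancel₀ _ hm.ne']
    exact le_max_right 1 M
  have hu : f ξ₁ ≤ R * m := (hMf ξ₁ hξ₁AB).trans hMm
  have hkey : γ * R * q ≤ 1 / 5 := by
    have h5 : γ * R ≤ (k : ℝ) / 5 := by linarith
    have hqk : q ≤ 1 / (k : ℝ) := by
      rw [hqdef]
      gcongr
    have hpr : γ * R * q ≤ (k : ℝ) / 5 * (1 / (k : ℝ)) :=
      mul_le_mul h5 hqk hq.le (by positivity)
    have hkk : (k : ℝ) / 5 * (1 / (k : ℝ)) = 1 / 5 := by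
      field_simp
    linarith
  have hstep : m * (f ξ₁ - f ξ₃) ≤ f ξ₁ * f ξ₃ * (γ * (3 * q)) := by
    have h1 : (f ξ₃)⁻¹ - (f ξ₁)⁻¹ ≤ γ * (p₃ - p₀) := le_trans hinv hγ13
    have h2 : m * ((f ξ₃)⁻¹ - (f ξ₁)⁻¹) ≤ γ * (3 * q) :=
      le_trans (mul_le_mul_of_nonneg_left h1 hm.le) hm13
    calc m * (f ξ₁ - f ξ₃)
        = f ξ₁ * f ξ₃ * (m * ((f ξ₃)⁻¹ - (f ξ₁)⁻¹)) := by rw [hid]; ring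
      _ ≤ f ξ₁ * f ξ₃ * (γ * (3 * q)) :=
          mul_le_mul_of_nonneg_left h2 (by positivity)
  have G3 : (p₃ - p₂) / (p₁ - p₀) ≤ 2 := by
    rw [hr, div_le_iff₀ hfξ₃pos]
    have hA : f ξ₁ * (f ξ₃ * (γ * (3 * q))) ≤ R * m * (f ξ₃ * (γ * (3 * q))) :=
      mul_le_mul_of_nonneg_right hu (by positivity)
    have hC : 3 * (m * f ξ₃) * (γ * R * q) ≤ 3 * (m * f ξ₃) * (1 / 5) :=
      mul_le_mul_of_nonneg_left hkey (by positivity)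
    have hmv : 0 < m * f ξ₃ := mul_pos hm hfξ₃pos
    have hgoal : m * f ξ₁ ≤ m * (2 * f ξ₃) := by linarith [hstep, hA, hC, hmv]
    exact le_of_mul_le_mul_left hgoal hm
  exact ⟨G1, G2, G3⟩
end

section
/- Let g : [a,b] → ℝ be twice continuously differentiable and let I₂g be its piecewise linear interpolant at knots a = a₀ < ⋯ < a_k = b. Then sup_{x∈[a,b]} |g(x) − I₂g(x)| ≤ (1/8) |a|² · sup_{x∈[a,b]} |g″(x)|, where |a| = max_j (a_j − a_{j−1}). -/
/-!
On one knot interval `[p, q]` the error `f = g - L` vanishes at both ends and `f'' = g''`. If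
`|g''| ≤ M`, then `±f - (M / 2) (t - p) (q - t)` is convex and non-positive at the ends, hence
non-positive on `[p, q]`. So `|f x| ≤ (M / 2) (x - p) (q - x) ≤ M (q - p)² / 8`.
-/

open Set

lemma hasDerivAt_mul_sub_mul_sub (p q t : ℝ) :
    HasDerivAt (fun s ↦ (s - p) * (q - s)) (p + q - 2 * t) t :=
  (((hasDerivAt_id' t).sub_const p).fun_mul ((hasDerivAt_id' t).const_sub q)).congr_deriv
    (by ring)

lemma le_half_mul_sub_mul_sub_of_neg_le_deriv2 {f f' f'' : ℝ → ℝ} {p q M : ℝ}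
    (hf : ContinuousOn f (Icc p q))
    (hf' : ∀ t ∈ Ioo p q, HasDerivAt f (f' t) t)
    (hf'' : ∀ t ∈ Ioo p q, HasDerivAt f' (f'' t) t)
    (hM : ∀ t ∈ Ioo p q, -M ≤ f'' t) (hp : f p ≤ 0) (hq : f q ≤ 0)
    {x : ℝ} (hx : x ∈ Icc p q) :
    f x ≤ M / 2 * ((x - p) * (q - x)) := by
  have hconvex : ConvexOn ℝ (Icc p q) fun t ↦ f t - M / 2 * ((t - p) * (q - t)) := by
    refine convexOn_of_hasDerivWithinAt2_nonneg (convex_Icc p q)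
      (f' := fun t ↦ f' t - M / 2 * (p + q - 2 * t)) (f'' := fun t ↦ f'' t + M)
      (hf.sub (by fun_prop)) (fun t ht ↦ ?_) (fun t ht ↦ ?_) (fun t ht ↦ ?_) <;>
      rw [interior_Icc] at ht
    · exact ((hf' t ht).fun_sub ((hasDerivAt_mul_sub_mul_sub p q t).const_mul _)).hasDerivWithinAt
    · refine ((hf'' t ht).fun_sub ((((hasDerivAt_id' t).const_mul 2).const_sub (p + q)).const_mul
        (M / 2))).hasDerivWithinAt.congr_deriv ?_
      ring
    · linarith [hM t ht]
  have hpq := hx.1.trans hx.2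
  have := hconvex.le_max_of_mem_Icc (left_mem_Icc.2 hpq) (right_mem_Icc.2 hpq) hx
  simp only [sub_self, zero_mul, mul_zero, sub_zero] at this
  linarith [max_le hp hq]

lemma abs_le_half_mul_sub_mul_sub_of_abs_deriv2_le {f f' f'' : ℝ → ℝ} {p q M : ℝ}
    (hf : ContinuousOn f (Icc p q))
    (hf' : ∀ t ∈ Ioo p q, HasDerivAt f (f' t) t)
    (hf'' : ∀ t ∈ Ioo p q, HasDerivAt f' (f'' t) t)
    (hM : ∀ t ∈ Ioo p q, |f'' t| ≤ M) (hp : f p = 0) (hq : f q = 0)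
    {x : ℝ} (hx : x ∈ Icc p q) :
    |f x| ≤ M / 2 * ((x - p) * (q - x)) := by
  refine abs_le'.2 ⟨?_, ?_⟩
  · exact le_half_mul_sub_mul_sub_of_neg_le_deriv2 hf hf' hf''
      (fun t ht ↦ neg_le_of_abs_le (hM t ht)) hp.le hq.le hx
  · exact le_half_mul_sub_mul_sub_of_neg_le_deriv2 (f' := fun t ↦ -f' t)
      (f'' := fun t ↦ -f'' t) hf.neg (fun t ht ↦ (hf' t ht).neg) (fun t ht ↦ (hf'' t ht).neg)
      (fun t ht ↦ neg_le_neg (le_of_abs_le (hM t ht))) (by simp [hp]) (by simp [hq]) hx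

lemma abs_sub_affine_le_of_abs_deriv2_le {g g' g'' : ℝ → ℝ} {p q M c d : ℝ}
    (hg : ContinuousOn g (Icc p q))
    (hg' : ∀ t ∈ Ioo p q, HasDerivAt g (g' t) t)
    (hg'' : ∀ t ∈ Ioo p q, HasDerivAt g' (g'' t) t)
    (hM : ∀ t ∈ Ioo p q, |g'' t| ≤ M) (hp : g p = c * p + d) (hq : g q = c * q + d)
    {x : ℝ} (hx : x ∈ Icc p q) :
    |g x - (c * x + d)| ≤ M / 2 * ((x - p) * (q - x)) :=
  abs_le_half_mul_sub_mul_sub_of_abs_deriv2_le (f := fun t ↦ g t - (c * t + d))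
    (f' := fun t ↦ g' t - c) (hg.sub (by fun_prop))
    (fun t ht ↦ (hg' t ht).fun_sub (((hasDerivAt_id' t).const_mul c).add_const d |>.congr_deriv
      (mul_one c)))
    (fun t ht ↦ (hg'' t ht).sub_const c) hM (sub_eq_zero.2 hp) (sub_eq_zero.2 hq) hx

lemma mul_sub_mul_sub_le (p q x : ℝ) : (x - p) * (q - x) ≤ (q - p) ^ 2 / 4 := by
  nlinarith [sq_nonneg (2 * x - p - q)]

lemma exists_lt_mem_Icc_succ {α : Type*} [LinearOrder α] (a : ℕ → α) {x : α}
    (h0 : a 0 ≤ x) {k : ℕ} (hk : 0 < k) (hx : x ≤ a k) :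
    ∃ j < k, x ∈ Icc (a j) (a (j + 1)) := by
  induction k, hk using Nat.le_induction with
  | base => exact ⟨0, one_pos, h0, hx⟩
  | succ n hn ih =>
    rcases le_or_gt x (a n) with hxn | hxn
    · obtain ⟨j, hj, hmem⟩ := ih hxn
      exact ⟨j, hj.trans n.lt_succ_self, hmem⟩
    · exact ⟨n, n.lt_succ_self, hxn.le, hx⟩

lemma Icc_succ_subset_Icc_of_lt_succ {α : Type*} [Preorder α] (a : ℕ → α) {k j : ℕ}
    (hmono : ∀ i < k, a i < a (i + 1)) (hj : j < k) :
    Icc (a j) (a (j + 1)) ⊆ Icc (a 0) (a k) :=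
  have hknots : MonotoneOn a (Iic k) := (strictMonoOn_Iic_of_lt_succ hmono).monotoneOn
  Icc_subset_Icc (hknots (Nat.zero_le k) hj.le (Nat.zero_le j))
    (hknots (Nat.succ_le_of_lt hj) self_mem_Iic (Nat.succ_le_of_lt hj))

theorem stmt_19_general (g g' g'' L : ℝ → ℝ) (k : ℕ) (a : ℕ → ℝ)
    (hmono : ∀ j < k, a j < a (j + 1))
    (hg : ∀ x ∈ Set.Icc (a 0) (a k), HasDerivAt g (g' x) x)
    (hg' : ∀ x ∈ Set.Icc (a 0) (a k), HasDerivAt g' (g'' x) x)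
    (hinterp : ∀ j ≤ k, L (a j) = g (a j))
    (haffine : ∀ j < k, ∃ c d : ℝ, ∀ x ∈ Set.Icc (a j) (a (j + 1)), L x = c * x + d)
    (mesh : ℝ) (hmesh : ∀ j < k, a (j + 1) - a j ≤ mesh)
    (M : ℝ) (hM : ∀ x ∈ Set.Icc (a 0) (a k), |g'' x| ≤ M) :
    ∀ x ∈ Set.Icc (a 0) (a k), |g x - L x| ≤ (1 / 8) * mesh ^ 2 * M := by
  intro x hx
  have hM0 : 0 ≤ M := (abs_nonneg _).trans (hM x hx)
  rcases k.eq_zero_or_pos with rfl | hk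
  · rw [le_antisymm hx.2 hx.1, hinterp 0 le_rfl, sub_self, abs_zero]
    positivity
  obtain ⟨j, hj, hxj⟩ := exists_lt_mem_Icc_succ a hx.1 hk hx.2
  have hsub := Icc_succ_subset_Icc_of_lt_succ a hmono hj
  obtain ⟨c, d, hL⟩ := haffine j hj
  have hpiece := abs_sub_affine_le_of_abs_deriv2_le
    (fun t ht ↦ (hg t (hsub ht)).continuousAt.continuousWithinAt)
    (fun t ht ↦ hg t (hsub (Ioo_subset_Icc_self ht)))
    (fun t ht ↦ hg' t (hsub (Ioo_subset_Icc_self ht)))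
    (fun t ht ↦ hM t (hsub (Ioo_subset_Icc_self ht)))
    (by rw [← hinterp j hj.le, hL _ (left_mem_Icc.2 (hmono j hj).le)])
    (by rw [← hinterp (j + 1) hj, hL _ (right_mem_Icc.2 (hmono j hj).le)]) hxj
  have hwidth : (a (j + 1) - a j) ^ 2 ≤ mesh ^ 2 :=
    pow_le_pow_left₀ (sub_nonneg.2 (hmono j hj).le) (hmesh j hj) 2
  calc |g x - L x| = |g x - (c * x + d)| := by rw [hL x hxj]
    _ ≤ M / 2 * ((x - a j) * (a (j + 1) - x)) := hpiece
    _ ≤ M / 2 * ((a (j + 1) - a j) ^ 2 / 4) := by gcongr; exact mul_sub_mul_sub_le _ _ _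
    _ ≤ M / 2 * (mesh ^ 2 / 4) := by gcongr
    _ = (1 / 8) * mesh ^ 2 * M := by ring

/-- Sharp linear interpolation error bound for C² functions:
`‖g - I₂g‖ ≤ (1/8)|a|² ‖g″‖`. -/
theorem stmt_19 (g g' g'' L : ℝ → ℝ) (k : ℕ) (hk : 0 < k) (a : ℕ → ℝ)
    (hmono : ∀ j < k, a j < a (j + 1))
    (hg : ∀ x ∈ Set.Icc (a 0) (a k), HasDerivAt g (g' x) x)
    (hg' : ∀ x ∈ Set.Icc (a 0) (a k), HasDerivAt g' (g'' x) x)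
    (hg'' : ContinuousOn g'' (Set.Icc (a 0) (a k)))
    (hinterp : ∀ j ≤ k, L (a j) = g (a j))
    (haffine : ∀ j < k, ∃ c d : ℝ, ∀ x ∈ Set.Icc (a j) (a (j + 1)), L x = c * x + d)
    (mesh : ℝ) (hmesh : ∀ j < k, a (j + 1) - a j ≤ mesh)
    (M : ℝ) (hM : ∀ x ∈ Set.Icc (a 0) (a k), |g'' x| ≤ M) :
    ∀ x ∈ Set.Icc (a 0) (a k), |g x - L x| ≤ (1 / 8) * mesh ^ 2 * M :=
  stmt_19_general g g' g'' L k a hmono hg hg' hinterp haffine mesh hmesh M hM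
end
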